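/- arXiv:2508.00594 — 5 statements merged into one kernel-verified Lean document; each statement's English description precedes it below -/
import Mathlib

section
/- Let a > 0 and s ∈ (0, 1/2), and let I = [0, a] ⊂ ℝ. Then the Gagliardo double integral of the indicator function of I is given exactly by ∫_ℝ ∫_ℝ |𝟙_I(x) − 𝟙_I(y)|² / |x − y|^{1+2s} dy dx = 2 a^{1−2s} / (s (1 − 2s)). In particular this quantity is finite. -/
/-!
Only pairs with exactly one point in `I = [0, a]` contribute, and by the symmetry of the kernel
the double integral is `2 ∫_I ∫_{Iᶜ} |x - y|^(-1-2s) dy dx`. For `x ∈ (0, a)` the inner integral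
is `(x^(-2s) + (a - x)^(-2s)) / (2s)`, which is integrable over `I` precisely because `2s < 1`.
-/

open MeasureTheory Set

open scoped ENNReal

lemma ofReal_sq_abs_indicator_sub_indicator {α : Type*} (E : Set α) (p : α × α) :
    ENNReal.ofReal (|E.indicator (fun _ => (1 : ℝ)) p.1 - E.indicator (fun _ => (1 : ℝ)) p.2| ^ 2)
      = (E ×ˢ Eᶜ ∪ Eᶜ ×ˢ E).indicator 1 p := by
  by_cases h₁ : p.1 ∈ E <;> by_cases h₂ : p.2 ∈ E <;> simp [h₁, h₂]

lemma lintegral_sq_abs_indicator_sub_indicator_mul {α : Type*} [MeasurableSpace α]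
    {μ : Measure α} [SFinite μ] {E : Set α} (hE : MeasurableSet E)
    {k : α → α → ℝ≥0∞} (hk : Measurable (Function.uncurry k)) (hk_symm : ∀ x y, k x y = k y x) :
    ∫⁻ p, ENNReal.ofReal (|E.indicator (fun _ => (1 : ℝ)) p.1
        - E.indicator (fun _ => (1 : ℝ)) p.2| ^ 2) * k p.1 p.2 ∂μ.prod μ
      = 2 * ∫⁻ x in E, ∫⁻ y in Eᶜ, k x y ∂μ ∂μ := by
  have hdisj : Disjoint (E ×ˢ Eᶜ) (Eᶜ ×ˢ E) :=
    disjoint_left.mpr fun p h₁ h₂ => h₂.1 h₁.1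
  calc ∫⁻ p, ENNReal.ofReal (|E.indicator (fun _ => (1 : ℝ)) p.1
          - E.indicator (fun _ => (1 : ℝ)) p.2| ^ 2) * k p.1 p.2 ∂μ.prod μ
      = ∫⁻ p in E ×ˢ Eᶜ ∪ Eᶜ ×ˢ E, k p.1 p.2 ∂μ.prod μ := by
        rw [← lintegral_indicator ((hE.prod hE.compl).union (hE.compl.prod hE))]
        refine lintegral_congr fun p => ?_
        rw [ofReal_sq_abs_indicator_sub_indicator]
        exact (indicator_mul_left _ 1 fun q : α × α => k q.1 q.2).symm.trans
          (by simp only [Pi.one_apply, one_mul])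
    _ = ∫⁻ x in E, ∫⁻ y in Eᶜ, k x y ∂μ ∂μ + ∫⁻ y in E, ∫⁻ x in Eᶜ, k x y ∂μ ∂μ := by
        rw [lintegral_union (hE.compl.prod hE) hdisj]
        exact congrArg₂ (· + ·) (setLIntegral_prod (Function.uncurry k) hk.aemeasurable.restrict)
          (setLIntegral_prod_symm (Function.uncurry k) hk.aemeasurable.restrict)
    _ = 2 * ∫⁻ x in E, ∫⁻ y in Eᶜ, k x y ∂μ ∂μ := by
        rw [two_mul]
        congr 1
        exact lintegral_congr fun y => lintegral_congr fun x => hk_symm x y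

lemma lintegral_Ioi_rpow_neg_one_sub {r c : ℝ} (hr : 0 < r) (hc : 0 < c) :
    ∫⁻ t in Ioi c, ENNReal.ofReal (t ^ (-1 - r)) = ENNReal.ofReal (c ^ (-r) / r) := by
  have hexp : -1 - r < -1 := by linarith
  rw [← ofReal_integral_eq_lintegral_ofReal (integrableOn_Ioi_rpow_of_lt hexp hc)
    (ae_restrict_of_forall_mem measurableSet_Ioi fun t ht => Real.rpow_nonneg (hc.trans ht).le _),
    integral_Ioi_rpow_of_lt hexp hc]
  congr 1
  rw [show -1 - r + 1 = -r by ring, neg_div_neg_eq]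

lemma lintegral_Ioi_abs_sub_rpow {r x b : ℝ} (hr : 0 < r) (hxb : x < b) :
    ∫⁻ y in Ioi b, ENNReal.ofReal (|x - y| ^ (-1 - r)) = ENNReal.ofReal ((b - x) ^ (-r) / r) := by
  calc ∫⁻ y in Ioi b, ENNReal.ofReal (|x - y| ^ (-1 - r))
      = ∫⁻ y in (· - x) ⁻¹' Ioi (b - x), ENNReal.ofReal ((y - x) ^ (-1 - r)) := by
        rw [preimage_sub_const_Ioi, sub_add_cancel]
        refine setLIntegral_congr_fun measurableSet_Ioi fun y hy => ?_
        rw [abs_sub_comm, abs_of_pos (sub_pos.mpr (hxb.trans hy))]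
    _ = ENNReal.ofReal ((b - x) ^ (-r) / r) := by
        rw [(measurePreserving_sub_right volume x).setLIntegral_comp_preimage_emb
          (measurableEmbedding_subRight x) (fun t => ENNReal.ofReal (t ^ (-1 - r))),
          lintegral_Ioi_rpow_neg_one_sub hr (sub_pos.mpr hxb)]

lemma lintegral_Iio_abs_sub_rpow {r x a : ℝ} (hr : 0 < r) (hax : a < x) :
    ∫⁻ y in Iio a, ENNReal.ofReal (|x - y| ^ (-1 - r)) = ENNReal.ofReal ((x - a) ^ (-r) / r) := by
  calc ∫⁻ y in Iio a, ENNReal.ofReal (|x - y| ^ (-1 - r))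
      = ∫⁻ y in (x - ·) ⁻¹' Ioi (x - a), ENNReal.ofReal ((x - y) ^ (-1 - r)) := by
        rw [preimage_const_sub_Ioi, sub_sub_cancel]
        refine setLIntegral_congr_fun measurableSet_Iio fun y hy => ?_
        rw [abs_of_pos (sub_pos.mpr (lt_trans hy hax))]
    _ = ENNReal.ofReal ((x - a) ^ (-r) / r) := by
        rw [(Measure.measurePreserving_sub_left volume x).setLIntegral_comp_preimage_emb
          (measurableEmbedding_subLeft x) (fun t => ENNReal.ofReal (t ^ (-1 - r))),
          lintegral_Ioi_rpow_neg_one_sub hr (sub_pos.mpr hax)]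

lemma lintegral_compl_Icc_abs_sub_rpow {r a b x : ℝ} (hr : 0 < r) (hx : x ∈ Ioo a b) :
    ∫⁻ y in (Icc a b)ᶜ, ENNReal.ofReal (|x - y| ^ (-1 - r))
      = ENNReal.ofReal (((x - a) ^ (-r) + (b - x) ^ (-r)) / r) := by
  have hcompl : (Icc a b)ᶜ = Iio a ∪ Ioi b := by
    ext y
    simp only [mem_compl_iff, mem_Icc, not_and_or, not_le, mem_union, mem_Iio, mem_Ioi]
  have hdisj : Disjoint (Iio a) (Ioi b) :=
    disjoint_left.mpr fun y ha hb => (lt_trans (lt_trans hx.1 hx.2) hb).not_gt ha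
  rw [hcompl, lintegral_union measurableSet_Ioi hdisj, lintegral_Iio_abs_sub_rpow hr hx.1,
    lintegral_Ioi_abs_sub_rpow hr hx.2, add_div,
    ENNReal.ofReal_add (div_nonneg (Real.rpow_nonneg (sub_pos.mpr hx.1).le _) hr.le)
      (div_nonneg (Real.rpow_nonneg (sub_pos.mpr hx.2).le _) hr.le)]

lemma intervalIntegral_sub_rpow {r a b : ℝ} (hr : r < 1) :
    ∫ x in a..b, (x - a) ^ (-r) = (b - a) ^ (1 - r) / (1 - r) := by
  rw [intervalIntegral.integral_comp_sub_right (fun x => x ^ (-r)), sub_self,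
    integral_rpow (Or.inl (by linarith)), Real.zero_rpow (by linarith), sub_zero, neg_add_eq_sub]

lemma intervalIntegral_rpow_sub {r a b : ℝ} (hr : r < 1) :
    ∫ x in a..b, (b - x) ^ (-r) = (b - a) ^ (1 - r) / (1 - r) := by
  rw [intervalIntegral.integral_comp_sub_left (fun x => x ^ (-r)), sub_self,
    integral_rpow (Or.inl (by linarith)), Real.zero_rpow (by linarith), sub_zero, neg_add_eq_sub]

lemma lintegral_Icc_sub_rpow_add_rpow_sub {r a b : ℝ} (hr₀ : 0 < r) (hr₁ : r < 1) (hab : a ≤ b) :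
    ∫⁻ x in Icc a b, ENNReal.ofReal (((x - a) ^ (-r) + (b - x) ^ (-r)) / r)
      = ENNReal.ofReal (2 * (b - a) ^ (1 - r) / (r * (1 - r))) := by
  have hexp : -1 < -r := by linarith
  have hleft : IntervalIntegrable (fun x => (x - a) ^ (-r)) volume a b := by
    simpa using
      (intervalIntegral.intervalIntegrable_rpow' (a := 0) (b := b - a) hexp).comp_sub_right a
  have hright : IntervalIntegrable (fun x => (b - x) ^ (-r)) volume a b := by
    simpa using
      (intervalIntegral.intervalIntegrable_rpow' (a := b - a) (b := 0) hexp).comp_sub_left b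
  have hsum := (hleft.add hright).div_const r
  rw [setLIntegral_congr Ioc_ae_eq_Icc.symm, ← ofReal_integral_eq_lintegral_ofReal
    ((intervalIntegrable_iff_integrableOn_Ioc_of_le hab).mp hsum)
    (ae_restrict_of_forall_mem measurableSet_Ioc fun x hx => div_nonneg
      (add_nonneg (Real.rpow_nonneg (sub_pos.mpr hx.1).le _)
        (Real.rpow_nonneg (sub_nonneg.mpr hx.2) _)) hr₀.le),
    ← intervalIntegral.integral_of_le hab, intervalIntegral.integral_div,
    intervalIntegral.integral_add hleft hright, intervalIntegral_sub_rpow hr₁,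
    intervalIntegral_rpow_sub hr₁]
  congr 1
  field_simp
  ring

lemma lintegral_Icc_lintegral_compl_Icc_abs_sub_rpow {r a b : ℝ} (hr₀ : 0 < r) (hr₁ : r < 1)
    (hab : a ≤ b) :
    ∫⁻ x in Icc a b, ∫⁻ y in (Icc a b)ᶜ, ENNReal.ofReal (|x - y| ^ (-1 - r))
      = ENNReal.ofReal (2 * (b - a) ^ (1 - r) / (r * (1 - r))) := by
  rw [setLIntegral_congr Ioo_ae_eq_Icc.symm,
    setLIntegral_congr_fun measurableSet_Ioo fun x hx => lintegral_compl_Icc_abs_sub_rpow hr₀ hx,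
    setLIntegral_congr Ioo_ae_eq_Icc, lintegral_Icc_sub_rpow_add_rpow_sub hr₀ hr₁ hab]

lemma integrable_and_integral_eq_of_lintegral_ofReal_eq {α : Type*} [MeasurableSpace α]
    {μ : Measure α} {f : α → ℝ} (hf : AEStronglyMeasurable f μ) (hf₀ : 0 ≤ᵐ[μ] f) {c : ℝ}
    (hc : 0 ≤ c) (h : ∫⁻ x, ENNReal.ofReal (f x) ∂μ = ENNReal.ofReal c) :
    Integrable f μ ∧ ∫ x, f x ∂μ = c :=
  ⟨⟨hf, (hasFiniteIntegral_iff_ofReal hf₀).mpr (h ▸ ENNReal.ofReal_lt_top)⟩, by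
    rw [integral_eq_lintegral_of_nonneg_ae hf₀ hf, h, ENNReal.toReal_ofReal hc]⟩

/-- The Gagliardo double integral of the indicator function of `[0, a]` equals
`2 a^(1-2s) / (s (1-2s))` for `a > 0` and `s ∈ (0, 1/2)`; in particular it is finite. -/
theorem stmt0 (a s : ℝ) (ha : 0 < a) (hs : s ∈ Set.Ioo (0 : ℝ) (1/2)) :
    Integrable (fun p : ℝ × ℝ =>
      |Set.indicator (Set.Icc (0:ℝ) a) (fun _ => (1:ℝ)) p.1
        - Set.indicator (Set.Icc (0:ℝ) a) (fun _ => (1:ℝ)) p.2| ^ 2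
        / |p.1 - p.2| ^ (1 + 2*s)) ∧
    (∫ x : ℝ, ∫ y : ℝ,
      |Set.indicator (Set.Icc (0:ℝ) a) (fun _ => (1:ℝ)) x
        - Set.indicator (Set.Icc (0:ℝ) a) (fun _ => (1:ℝ)) y| ^ 2
        / |x - y| ^ (1 + 2*s))
      = 2 * a ^ (1 - 2*s) / (s * (1 - 2*s)) := by
  obtain ⟨hs₀, hs₁⟩ := hs
  have hsplit : ∀ (f : ℝ → ℝ) (p : ℝ × ℝ),
      ENNReal.ofReal (|f p.1 - f p.2| ^ 2 / |p.1 - p.2| ^ (1 + 2 * s))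
        = ENNReal.ofReal (|f p.1 - f p.2| ^ 2) * ENNReal.ofReal (|p.1 - p.2| ^ (-1 - 2 * s)) := by
    intro f p
    rw [div_eq_mul_inv, ENNReal.ofReal_mul (sq_nonneg _), ← Real.rpow_neg (abs_nonneg _), neg_add']
  have hlintegral : ∫⁻ p : ℝ × ℝ, ENNReal.ofReal
      (|(Icc 0 a).indicator (fun _ => (1 : ℝ)) p.1 - (Icc 0 a).indicator (fun _ => (1 : ℝ)) p.2| ^ 2
        / |p.1 - p.2| ^ (1 + 2 * s))
      = ENNReal.ofReal (2 * a ^ (1 - 2 * s) / (s * (1 - 2 * s))) := by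
    rw [lintegral_congr (hsplit _), Measure.volume_eq_prod,
      lintegral_sq_abs_indicator_sub_indicator_mul
        (k := fun x y => ENNReal.ofReal (|x - y| ^ (-1 - 2 * s))) measurableSet_Icc (by fun_prop)
        (fun x y => by rw [abs_sub_comm]),
      lintegral_Icc_lintegral_compl_Icc_abs_sub_rpow (by positivity) (by linarith) ha.le, sub_zero,
      ← ENNReal.ofReal_ofNat 2, ← ENNReal.ofReal_mul zero_le_two]
    congr 1
    field_simp
  obtain ⟨hint, hval⟩ := integrable_and_integral_eq_of_lintegral_ofReal_eq
    (Measurable.aestronglyMeasurable (by measurability))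
    (ae_of_all _ fun p => div_nonneg (sq_nonneg _) (Real.rpow_nonneg (abs_nonneg _) _))
    (div_nonneg (by positivity) (mul_nonneg hs₀.le (by linarith))) hlintegral
  exact ⟨hint, (integral_integral hint).trans hval⟩
end

section
/- (Weighted L² bound for the Lorentzian; H^{−s} bound for the damped oscillation e^{−i n² t − γ n² |t|}.) For every s ∈ (0, 1/2) there exists a constant C = C(s) such that for every γ ∈ (0,1) and every integer n with |n| ≥ 1, ∫_ℝ (1 + ξ²)^{−s} ( γ n² / ((ξ + n²)² + (γ n²)²) )² dξ ≤ C ( 1/|n|^{2+4s} + 1/(γ |n|^{2+4s}) ) ≤ 2C / (γ |n|^{2+4s}). -/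
open MeasureTheory Real Set



lemma lorentz_integral (a c : ℝ) (ha : 0 < a) :
    ∫ ξ : ℝ, ((ξ + c) ^ 2 + a ^ 2)⁻¹ = π / a := by
  have h1 : ∫ ξ : ℝ, ((ξ + c) ^ 2 + a ^ 2)⁻¹ = ∫ ξ : ℝ, (ξ ^ 2 + a ^ 2)⁻¹ :=
    integral_add_right_eq_self (fun x => (x ^ 2 + a ^ 2)⁻¹) c
  have h2 : ∀ x : ℝ, (x ^ 2 + a ^ 2)⁻¹ = a⁻¹ * a⁻¹ * (1 + (x / a) ^ 2)⁻¹ := by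
    intro x
    rw [← mul_inv, ← mul_inv]
    congr 1
    field_simp
    ring
  rw [h1]
  simp_rw [h2]
  rw [MeasureTheory.integral_const_mul,
    MeasureTheory.Measure.integral_comp_div (fun y => (1 + y ^ 2)⁻¹) a,
    integral_univ_inv_one_add_sq, smul_eq_mul, abs_of_pos ha]
  field_simp

lemma lorentz_integrable (a c : ℝ) (ha : 0 < a) :
    Integrable (fun ξ : ℝ => ((ξ + c) ^ 2 + a ^ 2)⁻¹) := by
  have hbase : Integrable (fun ξ : ℝ => (1 + (ξ + c) ^ 2)⁻¹) :=
    integrable_inv_one_add_sq.comp_add_right c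
  have hcont : Continuous fun ξ : ℝ => ((ξ + c) ^ 2 + a ^ 2)⁻¹ := by
    apply Continuous.inv₀ (by continuity)
    intro x; positivity
  refine (hbase.const_mul ((1 + a⁻¹ ^ 2))).mono' hcont.aestronglyMeasurable ?_
  refine Filter.Eventually.of_forall fun ξ => ?_
  have hD : (0:ℝ) < (ξ + c) ^ 2 + a ^ 2 := by positivity
  rw [Real.norm_eq_abs, abs_of_nonneg (by positivity)]
  rw [inv_le_iff_one_le_mul₀ hD]
  have ha2 : a⁻¹ ^ 2 * a ^ 2 = 1 := by field_simp
  have h1 : (0:ℝ) < 1 + (ξ + c) ^ 2 := by positivity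
  have key : 1 + (ξ + c) ^ 2 ≤ (1 + a⁻¹ ^ 2) * ((ξ + c) ^ 2 + a ^ 2) := by
    nlinarith [sq_nonneg (ξ + c), sq_nonneg a⁻¹]
  refine le_trans ((one_le_div h1).mpr key) (le_of_eq ?_)
  rw [div_eq_mul_inv]
  ring


lemma weight_cont (s : ℝ) : Continuous (fun ξ : ℝ => (1 + ξ ^ 2) ^ (-s)) := by
  apply Continuous.rpow_const (by continuity)
  intro x
  left
  positivity

lemma weight_integral {s R : ℝ} (hs0 : 0 < s) (hs2 : s < 1/2) (hR : 0 < R) :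
    ∫ ξ in Ioo (-R) R, (1 + ξ ^ 2) ^ (-s) ≤ 2 / (1 - 2*s) * R ^ (1 - 2*s) := by
  set w : ℝ → ℝ := fun ξ : ℝ => (1 + ξ ^ 2) ^ (-s) with hw
  have hwc : Continuous w := weight_cont s
  have h12 : (0:ℝ) < 1 - 2*s := by linarith
  have hhalf : ∫ ξ in (0:ℝ)..R, w ξ ≤ R ^ (1 - 2*s) / (1 - 2*s) := by
    have hIoo : ∫ ξ in (0:ℝ)..R, w ξ = ∫ ξ in Ioo (0:ℝ) R, w ξ := by
      rw [intervalIntegral.integral_of_le hR.le, MeasureTheory.integral_Ioc_eq_integral_Ioo]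
    have hm_ii : IntervalIntegrable (fun x : ℝ => x ^ (-(2*s))) volume 0 R :=
      intervalIntegral.intervalIntegrable_rpow' (by linarith)
    have hm_int : IntegrableOn (fun x : ℝ => x ^ (-(2*s))) (Ioo (0:ℝ) R) := by
      have := (intervalIntegrable_iff_integrableOn_Ioc_of_le hR.le).mp hm_ii
      exact this.mono_set Ioo_subset_Ioc_self
    have hw_int : IntegrableOn w (Ioo (0:ℝ) R) :=
      (hwc.continuousOn.integrableOn_compact isCompact_Icc).mono_set Ioo_subset_Icc_self
    have hmono : ∫ ξ in Ioo (0:ℝ) R, w ξ ≤ ∫ x in Ioo (0:ℝ) R, x ^ (-(2*s)) := by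
      refine setIntegral_mono_on hw_int hm_int measurableSet_Ioo fun x hx => ?_
      have hx0 : 0 < x := hx.1
      have h1 : (1 + x ^ 2 : ℝ) ^ (-s) ≤ (x ^ 2 : ℝ) ^ (-s) :=
        rpow_le_rpow_of_nonpos (by positivity) (by nlinarith) (by linarith)
      have h2 : (x ^ 2 : ℝ) ^ (-s) = x ^ (-(2*s)) := by
        rw [← Real.rpow_natCast x 2, ← Real.rpow_mul hx0.le]
        norm_num
      rw [hw]
      calc (1 + x ^ 2 : ℝ) ^ (-s) ≤ (x ^ 2 : ℝ) ^ (-s) := h1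
        _ = x ^ (-(2*s)) := h2
    have hval : ∫ x in Ioo (0:ℝ) R, x ^ (-(2*s)) = R ^ (1 - 2*s) / (1 - 2*s) := by
      rw [← MeasureTheory.integral_Ioc_eq_integral_Ioo,
        ← intervalIntegral.integral_of_le hR.le,
        integral_rpow (Or.inl (by linarith))]
      rw [Real.zero_rpow (by linarith : -(2*s) + 1 ≠ 0)]
      norm_num
      ring_nf
    rw [hIoo]
    rw [hval] at hmono
    exact hmono
  have h_ii : ∀ a b : ℝ, IntervalIntegrable w volume a b := fun a b =>
    hwc.intervalIntegrable a b
  have hsplit : ∫ ξ in Ioo (-R) R, w ξ = (∫ ξ in (-R)..(0:ℝ), w ξ) + ∫ ξ in (0:ℝ)..R, w ξ := by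
    rw [intervalIntegral.integral_add_adjacent_intervals (h_ii _ _) (h_ii _ _),
      intervalIntegral.integral_of_le (by linarith), MeasureTheory.integral_Ioc_eq_integral_Ioo]
  have hneg : ∫ ξ in (-R)..(0:ℝ), w ξ = ∫ ξ in (0:ℝ)..R, w ξ := by
    have := intervalIntegral.integral_comp_neg (a := (0:ℝ)) (b := R) w
    simp only [neg_zero, neg_neg] at this
    rw [← this]
    congr 1
    ext x
    simp [hw, neg_sq]
  rw [hsplit, hneg]
  calc (∫ ξ in (0:ℝ)..R, w ξ) + ∫ ξ in (0:ℝ)..R, w ξ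
      ≤ R ^ (1 - 2*s) / (1 - 2*s) + R ^ (1 - 2*s) / (1 - 2*s) := add_le_add hhalf hhalf
    _ = 2 / (1 - 2*s) * R ^ (1 - 2*s) := by ring

set_option maxHeartbeats 2000000 in
/-- Weighted `L²` bound for the Lorentzian: for `s ∈ (0, 1/2)` there is `C = C(s)` such
that for all `γ ∈ (0,1)` and all integers `n` with `|n| ≥ 1`,
`∫ (1+ξ²)^{-s} L_{γ,n}(ξ)² dξ ≤ C (|n|^{-2-4s} + γ⁻¹|n|^{-2-4s}) ≤ 2C γ⁻¹ |n|^{-2-4s}`. -/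
theorem stmt7 (s : ℝ) (hs : s ∈ Set.Ioo (0:ℝ) (1/2)) :
    ∃ C > (0:ℝ), ∀ (γ : ℝ), γ ∈ Set.Ioo (0:ℝ) 1 → ∀ (n : ℤ), 1 ≤ |n| →
      (∫ ξ : ℝ, (1 + ξ^2) ^ (-s) *
          ((γ * (n:ℝ)^2) / ((ξ + (n:ℝ)^2)^2 + (γ * (n:ℝ)^2)^2))^2)
        ≤ C * (1 / |(n:ℝ)| ^ (2 + 4*s) + 1 / (γ * |(n:ℝ)| ^ (2 + 4*s))) ∧
      C * (1 / |(n:ℝ)| ^ (2 + 4*s) + 1 / (γ * |(n:ℝ)| ^ (2 + 4*s)))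
        ≤ 2 * C / (γ * |(n:ℝ)| ^ (2 + 4*s)) := by
  obtain ⟨hs0, hs2⟩ := hs
  have h12 : (0:ℝ) < 1 - 2*s := by linarith
  have hπ := Real.pi_pos
  have hC32 : (0:ℝ) < 32 / (1 - 2*s) := by positivity
  refine ⟨32 / (1 - 2*s) + 2 * π + 1, by linarith, ?_⟩
  set C : ℝ := 32 / (1 - 2*s) + 2 * π + 1 with hCdef
  rintro γ ⟨hγ0, hγ1⟩ n hn
  have hK1 : (1:ℝ) ≤ |(n:ℝ)| := by
    have h : ((1:ℤ):ℝ) ≤ ((|n|:ℤ):ℝ) := by exact_mod_cast hn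
    rwa [Int.cast_abs, Int.cast_one] at h
  set K := |(n:ℝ)| with hKdef
  have hK0 : (0:ℝ) < K := by linarith
  set N := (n:ℝ)^2 with hNdef
  have hNK : N = K^2 := (sq_abs (n:ℝ)).symm
  have hN1 : (1:ℝ) ≤ N := by nlinarith
  have hN0 : (0:ℝ) < N := by linarith
  set a := γ * N with hadef
  have ha : 0 < a := mul_pos hγ0 hN0
  set R := N / 2 with hRdef
  have hR : 0 < R := by positivity
  have hP0 : (0:ℝ) < K ^ (2 + 4*s) := Real.rpow_pos_of_pos hK0 _
  have hγP0 : (0:ℝ) < γ * K ^ (2 + 4*s) := mul_pos hγ0 hP0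
  clear_value K N a R
  constructor
  · -- main integral bound
    have hDpos : ∀ ξ : ℝ, (0:ℝ) < (ξ + N)^2 + a^2 := fun ξ => by positivity
    have hwpos : ∀ ξ : ℝ, (0:ℝ) < (1 + ξ^2) ^ (-s) := fun ξ =>
      Real.rpow_pos_of_pos (by positivity) _
    have hwle1 : ∀ ξ : ℝ, (1 + ξ^2) ^ (-s) ≤ 1 := fun ξ =>
      Real.rpow_le_one_of_one_le_of_nonpos (by nlinarith [sq_nonneg ξ]) (by linarith)
    have hsq_le : ∀ ξ : ℝ, (a / ((ξ + N)^2 + a^2))^2 ≤ ((ξ + N)^2 + a^2)⁻¹ := by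
      intro ξ
      have hD := hDpos ξ
      rw [div_pow, div_le_iff₀ (by positivity)]
      have hinv : ((ξ + N)^2 + a^2)⁻¹ * ((ξ + N)^2 + a^2)^2 = (ξ + N)^2 + a^2 := by
        field_simp
      rw [hinv]
      nlinarith [sq_nonneg (ξ + N)]
    have hg_cont : Continuous (fun ξ : ℝ =>
        (1 + ξ^2) ^ (-s) * (a / ((ξ + N)^2 + a^2))^2) := by
      apply (weight_cont s).mul
      apply Continuous.pow
      exact Continuous.div continuous_const
        (((continuous_id.add continuous_const).pow 2).add continuous_const)
        (fun ξ => (hDpos ξ).ne')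
    have hD_int : Integrable (fun ξ : ℝ => ((ξ + N)^2 + a^2)⁻¹) := lorentz_integrable a N ha
    have hg_int : Integrable (fun ξ : ℝ =>
        (1 + ξ^2) ^ (-s) * (a / ((ξ + N)^2 + a^2))^2) := by
      refine hD_int.mono' hg_cont.aestronglyMeasurable (Filter.Eventually.of_forall fun ξ => ?_)
      rw [Real.norm_eq_abs, abs_of_nonneg (by positivity)]
      calc (1 + ξ^2) ^ (-s) * (a / ((ξ + N)^2 + a^2))^2
          ≤ 1 * (a / ((ξ + N)^2 + a^2))^2 :=
            mul_le_mul_of_nonneg_right (hwle1 ξ) (by positivity)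
        _ = (a / ((ξ + N)^2 + a^2))^2 := one_mul _
        _ ≤ ((ξ + N)^2 + a^2)⁻¹ := hsq_le ξ
    have hsplit := (integral_add_compl (measurableSet_Ioo (a := -R) (b := R)) hg_int).symm
    -- region B
    have hBpt : ∀ ξ ∈ Ioo (-R) R,
        (1 + ξ^2) ^ (-s) * (a / ((ξ + N)^2 + a^2))^2 ≤ 16 * γ^2 / N^2 * ((1 + ξ^2) ^ (-s)) := by
      intro ξ hξ
      have hξ1 : -R < ξ := hξ.1
      have hNR : N - R = R := by rw [hRdef]; ring
      have h1 : R ≤ ξ + N := by linarith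
      have hD := hDpos ξ
      have h2 : (a / ((ξ + N)^2 + a^2))^2 ≤ 16 * γ^2 / N^2 := by
        have hx : R^2 ≤ (ξ + N)^2 + a^2 := by nlinarith [sq_nonneg a]
        have h3 : a / ((ξ + N)^2 + a^2) ≤ a / R^2 :=
          div_le_div_of_nonneg_left ha.le (by positivity) hx
        have h4 : a / R^2 = 4 * γ / N := by
          rw [hadef, hRdef]
          field_simp
          ring
        have h5 : (0:ℝ) ≤ a / ((ξ + N)^2 + a^2) := by positivity
        calc (a / ((ξ + N)^2 + a^2))^2 ≤ (a / R^2)^2 := by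
              apply pow_le_pow_left₀ h5 h3
          _ = (4 * γ / N)^2 := by rw [h4]
          _ = 16 * γ^2 / N^2 := by ring
      calc (1 + ξ^2) ^ (-s) * (a / ((ξ + N)^2 + a^2))^2
          ≤ (1 + ξ^2) ^ (-s) * (16 * γ^2 / N^2) :=
            mul_le_mul_of_nonneg_left h2 (hwpos ξ).le
        _ = 16 * γ^2 / N^2 * ((1 + ξ^2) ^ (-s)) := mul_comm _ _
    have hw_intB : IntegrableOn (fun ξ : ℝ => (1 + ξ^2) ^ (-s)) (Ioo (-R) R) :=
      ((weight_cont s).continuousOn.integrableOn_compact isCompact_Icc).mono_set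
        Ioo_subset_Icc_self
    have hB : ∫ ξ in Ioo (-R) R, (1 + ξ^2) ^ (-s) * (a / ((ξ + N)^2 + a^2))^2
        ≤ 16 * γ^2 / N^2 * (2 / (1 - 2*s) * R ^ (1 - 2*s)) := by
      calc ∫ ξ in Ioo (-R) R, (1 + ξ^2) ^ (-s) * (a / ((ξ + N)^2 + a^2))^2
          ≤ ∫ ξ in Ioo (-R) R, 16 * γ^2 / N^2 * ((1 + ξ^2) ^ (-s)) :=
            setIntegral_mono_on hg_int.integrableOn (hw_intB.const_mul _)
              measurableSet_Ioo hBpt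
        _ = 16 * γ^2 / N^2 * ∫ ξ in Ioo (-R) R, (1 + ξ^2) ^ (-s) :=
            MeasureTheory.integral_const_mul _ _
        _ ≤ 16 * γ^2 / N^2 * (2 / (1 - 2*s) * R ^ (1 - 2*s)) :=
            mul_le_mul_of_nonneg_left (weight_integral hs0 hs2 hR) (by positivity)
    -- region A
    have hApt : ∀ ξ ∈ (Ioo (-R) R)ᶜ,
        (1 + ξ^2) ^ (-s) * (a / ((ξ + N)^2 + a^2))^2
          ≤ (R^2) ^ (-s) * ((ξ + N)^2 + a^2)⁻¹ := by
      intro ξ hξ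
      simp only [mem_compl_iff, mem_Ioo, not_and, not_lt] at hξ
      have hR2 : R^2 ≤ ξ^2 := by
        by_cases hcase : -R < ξ
        · have := hξ hcase
          nlinarith
        · push_neg at hcase
          nlinarith
      have hwb : (1 + ξ^2) ^ (-s) ≤ (R^2) ^ (-s) :=
        rpow_le_rpow_of_nonpos (by positivity) (by nlinarith) (by linarith)
      calc (1 + ξ^2) ^ (-s) * (a / ((ξ + N)^2 + a^2))^2
          ≤ (R^2) ^ (-s) * (a / ((ξ + N)^2 + a^2))^2 :=
            mul_le_mul_of_nonneg_right hwb (by positivity)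
        _ ≤ (R^2) ^ (-s) * ((ξ + N)^2 + a^2)⁻¹ :=
            mul_le_mul_of_nonneg_left (hsq_le ξ) (by positivity)
    have hA : ∫ ξ in (Ioo (-R) R)ᶜ, (1 + ξ^2) ^ (-s) * (a / ((ξ + N)^2 + a^2))^2
        ≤ (R^2) ^ (-s) * (π / a) := by
      calc ∫ ξ in (Ioo (-R) R)ᶜ, (1 + ξ^2) ^ (-s) * (a / ((ξ + N)^2 + a^2))^2
          ≤ ∫ ξ in (Ioo (-R) R)ᶜ, (R^2) ^ (-s) * ((ξ + N)^2 + a^2)⁻¹ :=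
            setIntegral_mono_on hg_int.integrableOn (hD_int.const_mul _).integrableOn
              measurableSet_Ioo.compl hApt
        _ ≤ ∫ ξ : ℝ, (R^2) ^ (-s) * ((ξ + N)^2 + a^2)⁻¹ :=
            setIntegral_le_integral (hD_int.const_mul _)
              (Filter.Eventually.of_forall fun ξ => by positivity)
        _ = (R^2) ^ (-s) * (π / a) := by
            rw [MeasureTheory.integral_const_mul, lorentz_integral a N ha]
    -- rpow arithmetic
    have hNr : N = K ^ (2:ℝ) := by
      rw [hNK, ← Real.rpow_natCast K 2]
      norm_num
    have hN2 : N^2 = K ^ (4:ℝ) := by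
      rw [hNr, ← Real.rpow_natCast (K ^ (2:ℝ)) 2, ← Real.rpow_mul hK0.le]
      norm_num
    have hRN : R ^ (1 - 2*s) ≤ K ^ (2 - 4*s) := by
      have h1 : R ^ (1 - 2*s) ≤ N ^ (1 - 2*s) :=
        Real.rpow_le_rpow hR.le (by rw [hRdef]; linarith) (by linarith)
      have h2 : N ^ (1 - 2*s) = K ^ (2 - 4*s) := by
        rw [hNr, ← Real.rpow_mul hK0.le]
        ring_nf
      rw [h2] at h1
      exact h1
    have hKdiv : K ^ (2 - 4*s) / K ^ (4:ℝ) = 1 / K ^ (2 + 4*s) := by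
      rw [← Real.rpow_sub hK0, show (2 - 4*s) - 4 = -(2 + 4*s) by ring,
        Real.rpow_neg hK0.le, one_div]
    have hT1 : 16 * γ^2 / N^2 * (2 / (1 - 2*s) * R ^ (1 - 2*s))
        ≤ 32 / (1 - 2*s) * (1 / K ^ (2 + 4*s)) := by
      have e1 : 16 * γ^2 / N^2 * (2 / (1 - 2*s) * R ^ (1 - 2*s))
          = 32 / (1 - 2*s) * (γ^2 * (R ^ (1 - 2*s) / N^2)) := by
        field_simp
        ring
      have e2 : R ^ (1 - 2*s) / N^2 ≤ 1 / K ^ (2 + 4*s) := by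
        rw [hN2, ← hKdiv]
        gcongr
      have hx0 : (0:ℝ) ≤ R ^ (1 - 2*s) / N^2 := by positivity
      have hγ2 : γ^2 ≤ 1 := by nlinarith
      rw [e1]
      have : γ^2 * (R ^ (1 - 2*s) / N^2) ≤ 1 / K ^ (2 + 4*s) := by nlinarith
      exact mul_le_mul_of_nonneg_left this hC32.le
    have hT2 : (R^2) ^ (-s) * (π / a) ≤ 2 * π * (1 / (γ * K ^ (2 + 4*s))) := by
      have h4s : (4:ℝ) ^ s ≤ 2 := by
        have h1 : (4:ℝ) ^ s ≤ (4:ℝ) ^ (1/2 : ℝ) :=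
          Real.rpow_le_rpow_of_exponent_le (by norm_num) (by linarith)
        have h2 : (4:ℝ) ^ (1/2 : ℝ) = 2 := by
          rw [show (4:ℝ) = 2^(2:ℕ) by norm_num, ← Real.rpow_natCast 2 2,
            ← Real.rpow_mul (by norm_num : (0:ℝ) ≤ 2)]
          norm_num
        linarith
      have hR2eq : R^2 = N^2 / 4 := by rw [hRdef]; ring
      have e1 : (R^2 : ℝ) ^ (-s) = (N^2) ^ (-s) * 4 ^ s := by
        rw [hR2eq, Real.div_rpow (by positivity) (by norm_num),
          Real.rpow_neg (by norm_num : (0:ℝ) ≤ 4), div_eq_mul_inv, inv_inv]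
      have e2 : (N^2 : ℝ) ^ (-s) = K ^ (-(4*s)) := by
        rw [hN2, ← Real.rpow_mul hK0.le]
        ring_nf
      have e4 : K ^ (-(4*s)) / K ^ (2:ℝ) = 1 / K ^ (2 + 4*s) := by
        rw [← Real.rpow_sub hK0, show -(4*s) - 2 = -(2 + 4*s) by ring,
          Real.rpow_neg hK0.le, one_div]
      have e5 : K ^ (-(4*s)) * (π / a) = π * (1 / (γ * K ^ (2 + 4*s))) := by
        rw [hadef, hNr]
        calc K ^ (-(4*s)) * (π / (γ * K ^ (2:ℝ)))
            = π * (K ^ (-(4*s)) / K ^ (2:ℝ)) / γ := by ring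
          _ = π * (1 / K ^ (2 + 4*s)) / γ := by rw [e4]
          _ = π * (1 / (γ * K ^ (2 + 4*s))) := by
              rw [mul_one_div, mul_one_div, div_div, mul_comm (K ^ (2 + 4*s)) γ]
      calc (R^2) ^ (-s) * (π / a) = 4 ^ s * (K ^ (-(4*s)) * (π / a)) := by
            rw [e1, e2]; ring
        _ ≤ 2 * (K ^ (-(4*s)) * (π / a)) :=
            mul_le_mul_of_nonneg_right h4s (by positivity)
        _ = 2 * π * (1 / (γ * K ^ (2 + 4*s))) := by rw [e5]; ring
    -- combine
    have hfinal : (∫ ξ : ℝ, (1 + ξ^2) ^ (-s) * (a / ((ξ + N)^2 + a^2))^2)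
        ≤ 32 / (1 - 2*s) * (1 / K ^ (2 + 4*s)) + 2 * π * (1 / (γ * K ^ (2 + 4*s))) := by
      rw [hsplit]
      exact le_trans (add_le_add hB hA) (add_le_add hT1 hT2)
    refine le_trans hfinal ?_
    have h1 : (0:ℝ) ≤ 1 / K ^ (2 + 4*s) := by positivity
    have h2 : (0:ℝ) ≤ 1 / (γ * K ^ (2 + 4*s)) := by positivity
    rw [hCdef]
    nlinarith
  · -- second inequality
    have h1 : 1 / K ^ (2 + 4*s) ≤ 1 / (γ * K ^ (2 + 4*s)) := by
      apply one_div_le_one_div_of_le hγP0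
      nlinarith
    have hC : (0:ℝ) < C := by rw [hCdef]; linarith
    calc C * (1 / K ^ (2 + 4*s) + 1 / (γ * K ^ (2 + 4*s)))
        ≤ C * (1 / (γ * K ^ (2 + 4*s)) + 1 / (γ * K ^ (2 + 4*s))) := by
          apply mul_le_mul_of_nonneg_left _ hC.le
          linarith
      _ = 2 * C / (γ * K ^ (2 + 4*s)) := by ring
end

section
/- (Cross-term summability for Lorentzians at intermediate frequencies.) There exist s ∈ (1/4, 1/2), η > 0, and a constant C > 0 such that for every γ ∈ (0, 1), ∑ over pairs of integers (n, m) with γ^{−1/2+η} < n < m < γ^{−1/2−η} of the quantity ∫_ℝ (1 + ξ²)^{−s} L_{γ,n}(ξ) L_{γ,m}(ξ) dξ is at most C. -/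
open MeasureTheory

/-- The Lorentzian `L_{γ,n}(ξ) = γn² / ((ξ+n²)² + (γn²)²)`. -/
noncomputable def lorentzian (γ : ℝ) (n : ℤ) (ξ : ℝ) : ℝ :=
  γ * (n:ℝ)^2 / ((ξ + (n:ℝ)^2)^2 + (γ * (n:ℝ)^2)^2)

/-!
The weight `(1 + ξ²)^{-s}` is at most `1`. The Lorentzians `L_{γ,n}`, `L_{γ,m}` have centres
`-n²`, `-m²` at distance `m² - n²`, so their denominators satisfy `A + B ≥ (m² - n²)² / 2`, and
`1 / (AB) = (1/A + 1/B) / (A + B)` gives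
`L_{γ,n} L_{γ,m} ≤ 2γ / (m² - n²)² · (m² L_{γ,n} + n² L_{γ,m})`. As each Lorentzian has integral
`π`, the cross term is at most `4πγ / (m - n)²`. Summing over `m` costs a factor `ζ(2)` and
there are fewer than `γ^{-3/4}` values of `n`, so with `η = 1/4` the sum is `O(γ^{1/4})`.
-/

open Real ProbabilityTheory Finset

lemma lorentzian_eq_pi_mul_cauchyPDFReal {γ : ℝ} (hγ : 0 ≤ γ) (n : ℤ) :
    lorentzian γ n = fun ξ ↦ π * cauchyPDFReal (-(n:ℝ)^2) (γ * (n:ℝ)^2).toNNReal ξ := by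
  ext ξ
  rw [lorentzian, cauchyPDFReal_def, Real.coe_toNNReal _ (by positivity), sub_neg_eq_add]
  field_simp

lemma lorentzian_nonneg {γ : ℝ} (hγ : 0 ≤ γ) (n : ℤ) (ξ : ℝ) : 0 ≤ lorentzian γ n ξ := by
  unfold lorentzian
  positivity

lemma integrable_lorentzian {γ : ℝ} (hγ : 0 ≤ γ) (n : ℤ) : Integrable (lorentzian γ n) := by
  rw [lorentzian_eq_pi_mul_cauchyPDFReal hγ]
  exact (integrable_cauchyPDFReal _).const_mul π

lemma integral_lorentzian {γ : ℝ} (hγ : 0 < γ) {n : ℤ} (hn : n ≠ 0) :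
    ∫ ξ, lorentzian γ n ξ = π := by
  rw [lorentzian_eq_pi_mul_cauchyPDFReal hγ.le, integral_const_mul,
    integral_cauchyPDFReal_eq_one, mul_one]
  rw [Ne, Real.toNNReal_eq_zero, not_le]
  positivity

lemma inv_mul_le_of_le_two_mul_add {A B D : ℝ} (hA : 0 < A) (hB : 0 < B) (hD : 0 < D)
    (h : D ≤ 2 * (A + B)) : (A * B)⁻¹ ≤ 2 / D * (A⁻¹ + B⁻¹) := by
  have key : (A * B)⁻¹ = (A⁻¹ + B⁻¹) / (A + B) := by field_simp; ring
  rw [key, div_eq_mul_inv, mul_comm]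
  gcongr
  rw [inv_le_comm₀ (by positivity) (by positivity), inv_div]
  linarith

lemma lorentzian_mul_le {γ : ℝ} (hγ : 0 < γ) {n m : ℤ} (hn : 0 < n) (hnm : n < m) (ξ : ℝ) :
    lorentzian γ n ξ * lorentzian γ m ξ ≤
      2 * γ / ((m:ℝ)^2 - (n:ℝ)^2)^2 * ((m:ℝ)^2 * lorentzian γ n ξ + (n:ℝ)^2 * lorentzian γ m ξ) := by
  have hn' : (0:ℝ) < n := by exact_mod_cast hn
  have hnm' : (n:ℝ) < m := by exact_mod_cast hnm
  set A := (ξ + (n:ℝ)^2)^2 + (γ * (n:ℝ)^2)^2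
  set B := (ξ + (m:ℝ)^2)^2 + (γ * (m:ℝ)^2)^2
  have hA : 0 < A := by positivity
  have hB : 0 < B := by
    have : (0:ℝ) < m := hn'.trans hnm'
    positivity
  have hD : 0 < ((m:ℝ)^2 - (n:ℝ)^2)^2 := by
    have : (n:ℝ)^2 < (m:ℝ)^2 := by gcongr
    nlinarith
  have hAB : ((m:ℝ)^2 - (n:ℝ)^2)^2 ≤ 2 * (A + B) := by
    nlinarith [sq_nonneg (2 * ξ + (n:ℝ)^2 + (m:ℝ)^2), sq_nonneg (γ * (n:ℝ)^2),
      sq_nonneg (γ * (m:ℝ)^2)]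
  have h := inv_mul_le_of_le_two_mul_add hA hB hD hAB
  simp only [lorentzian]
  calc γ * (n:ℝ)^2 / A * (γ * (m:ℝ)^2 / B) = γ^2 * (n:ℝ)^2 * (m:ℝ)^2 * (A * B)⁻¹ := by rw [mul_inv]; ring
    _ ≤ γ^2 * (n:ℝ)^2 * (m:ℝ)^2 * (2 / ((m:ℝ)^2 - (n:ℝ)^2)^2 * (A⁻¹ + B⁻¹)) := by gcongr
    _ = _ := by ring

lemma integral_rpow_mul_lorentzian_mul_le {γ s : ℝ} (hγ : 0 < γ) (hs : 0 ≤ s) {n m : ℤ}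
    (hn : 0 < n) (hnm : n < m) :
    ∫ ξ, (1 + ξ^2) ^ (-s) * (lorentzian γ n ξ * lorentzian γ m ξ) ≤
      4 * π * γ / ((m:ℝ) - n)^2 := by
  have hn' : (0:ℝ) < n := by exact_mod_cast hn
  have hnm' : (n:ℝ) < m := by exact_mod_cast hnm
  have hLn := integrable_lorentzian hγ.le n
  have hLm := integrable_lorentzian hγ.le m
  have hweight : ∀ ξ : ℝ, (1 + ξ^2) ^ (-s) ≤ 1 := fun ξ ↦
    rpow_le_one_of_one_le_of_nonpos (by nlinarith [sq_nonneg ξ]) (by linarith)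
  have hprod : ∀ ξ, 0 ≤ lorentzian γ n ξ * lorentzian γ m ξ := fun ξ ↦
    mul_nonneg (lorentzian_nonneg hγ.le n ξ) (lorentzian_nonneg hγ.le m ξ)
  set c := 2 * γ / ((m:ℝ)^2 - (n:ℝ)^2)^2
  calc ∫ ξ, (1 + ξ^2) ^ (-s) * (lorentzian γ n ξ * lorentzian γ m ξ)
      ≤ ∫ ξ, c * ((m:ℝ)^2 * lorentzian γ n ξ + (n:ℝ)^2 * lorentzian γ m ξ) := by
        refine integral_mono_of_nonneg (.of_forall fun ξ ↦ ?_)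
          (((hLn.const_mul _).add (hLm.const_mul _)).const_mul _) (.of_forall fun ξ ↦ ?_)
        · exact mul_nonneg (rpow_nonneg (by positivity) _) (hprod ξ)
        · exact (mul_le_of_le_one_left (hprod ξ) (hweight ξ)).trans
            (lorentzian_mul_le hγ hn hnm ξ)
    _ = c * ((m:ℝ)^2 * π + (n:ℝ)^2 * π) := by
        rw [integral_const_mul, integral_add (hLn.const_mul _) (hLm.const_mul _),
          integral_const_mul, integral_const_mul, integral_lorentzian hγ hn.ne',
          integral_lorentzian hγ (hn.trans hnm).ne']
    _ ≤ 4 * π * γ / ((m:ℝ) - n)^2 := by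
        have hmn : 0 < (m:ℝ) - n := by linarith
        have hD : 0 < ((m:ℝ)^2 - (n:ℝ)^2)^2 := by
          have : (n:ℝ)^2 < (m:ℝ)^2 := by gcongr
          nlinarith
        rw [div_mul_eq_mul_div, div_le_div_iff₀ (by positivity) (by positivity)]
        have : ((m:ℝ)^2 + (n:ℝ)^2) ≤ 2 * ((m:ℝ) + n)^2 := by nlinarith
        calc 2 * γ * ((m:ℝ)^2 * π + (n:ℝ)^2 * π) * ((m:ℝ) - n)^2
            = 2 * γ * π * ((m:ℝ) - n)^2 * ((m:ℝ)^2 + (n:ℝ)^2) := by ring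
          _ ≤ 2 * γ * π * ((m:ℝ) - n)^2 * (2 * ((m:ℝ) + n)^2) := by gcongr
          _ = 4 * π * γ * ((m:ℝ)^2 - (n:ℝ)^2)^2 := by ring

lemma sum_one_div_sub_sq_le (t : Finset (ℤ × ℤ)) {X : ℝ}
    (ht : ∀ p ∈ t, 0 < p.1 ∧ p.1 < p.2 ∧ (p.1 : ℝ) < X) :
    ∑ p ∈ t, 1 / ((p.2 : ℝ) - p.1)^2 ≤ ⌊X⌋₊ * (π^2 / 6) := by
  -- reindex by `(n, m - n)`, which ranges over `[1, ⌊X⌋] × ℕ`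
  set e : ℤ × ℤ → ℤ × ℕ := fun p ↦ (p.1, (p.2 - p.1).toNat)
  set K := t.image fun p ↦ (p.2 - p.1).toNat
  have he : ∀ p ∈ t, (((e p).2 : ℕ) : ℝ) = (p.2 : ℝ) - p.1 := fun p hp ↦ by
    have : ((e p).2 : ℤ) = p.2 - p.1 := Int.toNat_of_nonneg (by linarith [(ht p hp).2.1])
    exact_mod_cast this
  have he_inj : Set.InjOn e t := fun p hp q hq hpq ↦ by
    have h1 := congrArg Prod.fst hpq
    have h2 := congrArg (fun x : ℤ × ℕ ↦ ((x.2 : ℕ) : ℝ)) hpq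
    simp only [he p hp, he q hq] at h2
    simp only [e] at h1
    ext
    · exact h1
    · have : (p.2 : ℝ) = q.2 := by rw [h1] at h2; linarith
      exact_mod_cast this
  have he_maps : t.image e ⊆ Icc 1 ⌊X⌋ ×ˢ K := by
    intro x hx
    obtain ⟨p, hp, rfl⟩ := mem_image.mp hx
    obtain ⟨h1, -, h3⟩ := ht p hp
    refine mem_product.mpr ⟨mem_Icc.mpr ⟨h1, Int.le_floor.mpr h3.le⟩, mem_image_of_mem _ hp⟩
  calc ∑ p ∈ t, 1 / ((p.2 : ℝ) - p.1)^2
      = ∑ x ∈ t.image e, 1 / ((x.2 : ℕ) : ℝ)^2 := by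
        rw [sum_image he_inj]
        exact sum_congr rfl fun p hp ↦ by rw [he p hp]
    _ ≤ ∑ x ∈ Icc 1 ⌊X⌋ ×ˢ K, 1 / ((x.2 : ℕ) : ℝ)^2 :=
        sum_le_sum_of_subset_of_nonneg he_maps fun _ _ _ ↦ by positivity
    _ = (Icc 1 ⌊X⌋).card * ∑ k ∈ K, 1 / ((k : ℕ) : ℝ)^2 := by
        simp only [sum_product, sum_const, nsmul_eq_mul]
    _ ≤ ⌊X⌋₊ * (π^2 / 6) := by
        rw [Int.card_Icc, add_sub_cancel_right, Int.floor_toNat]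
        gcongr
        exact sum_le_hasSum K (fun _ _ ↦ by positivity) hasSum_zeta_two

/-- Cross-term summability for Lorentzians at intermediate frequencies: there exist
`s ∈ (1/4, 1/2)`, `η > 0`, and `C > 0` such that for every `γ ∈ (0,1)`, the sum over
pairs of integers `γ^{-1/2+η} < n < m < γ^{-1/2-η}` of
`∫ (1+ξ²)^{-s} L_{γ,n}(ξ) L_{γ,m}(ξ) dξ` is at most `C`. -/
theorem stmt11 :
    ∃ s ∈ Set.Ioo (1/4 : ℝ) (1/2), ∃ η > (0:ℝ), ∃ C > (0:ℝ),
      ∀ (γ : ℝ), γ ∈ Set.Ioo (0:ℝ) 1 →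
        (∑' p : {p : ℤ × ℤ //
            γ ^ (-(1:ℝ)/2 + η) < (p.1 : ℝ) ∧ p.1 < p.2 ∧ (p.2 : ℝ) < γ ^ (-(1:ℝ)/2 - η)},
          ∫ ξ : ℝ, (1 + ξ^2) ^ (-s) * (lorentzian γ p.1.1 ξ * lorentzian γ p.1.2 ξ))
          ≤ C := by
  refine ⟨1/3, ⟨by norm_num, by norm_num⟩, 1/4, by norm_num, 2 * π^3 / 3, by positivity, ?_⟩
  rintro γ ⟨hγ0, hγ1⟩
  set X := γ ^ (-(1:ℝ)/2 - 1/4)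
  have hlow : 1 < γ ^ (-(1:ℝ)/2 + 1/4) :=
    one_lt_rpow_of_pos_of_lt_one_of_neg hγ0 hγ1 (by norm_num)
  have hγX : γ * X = γ ^ (1/4 : ℝ) := by
    rw [← rpow_one_add' hγ0.le (by norm_num)]
    norm_num
  refine tsum_le_of_sum_le' (by positivity) fun u ↦ ?_
  have hpos : ∀ p ∈ u, 0 < p.1.1 := fun p _ ↦
    Int.cast_pos.mp (zero_lt_one.trans (hlow.trans p.2.1))
  calc ∑ p ∈ u, ∫ ξ, (1 + ξ^2) ^ (-(1/3 : ℝ)) * (lorentzian γ p.1.1 ξ * lorentzian γ p.1.2 ξ)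
      ≤ ∑ p ∈ u, 4 * π * γ * (1 / ((p.1.2 : ℝ) - p.1.1)^2) := sum_le_sum fun p hp ↦ by
        rw [← div_eq_mul_one_div]
        exact integral_rpow_mul_lorentzian_mul_le hγ0 (by norm_num) (hpos p hp) p.2.2.1
    _ = 4 * π * γ * ∑ q ∈ u.map (Function.Embedding.subtype _), 1 / ((q.2 : ℝ) - q.1)^2 := by
        rw [mul_sum, sum_map]
        rfl
    _ ≤ 4 * π * γ * (⌊X⌋₊ * (π^2 / 6)) := by
        gcongr
        refine sum_one_div_sub_sq_le _ fun q hq ↦ ?_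
        obtain ⟨p, hp, rfl⟩ := mem_map.mp hq
        exact ⟨hpos p hp, p.2.2.1, by exact_mod_cast (Int.cast_lt.mpr p.2.2.1).trans p.2.2.2⟩
    _ ≤ 4 * π * γ * (X * (π^2 / 6)) := by gcongr; exact Nat.floor_le (by positivity)
    _ = 2 * π^3 / 3 * γ ^ (1/4 : ℝ) := by rw [← hγX]; ring
    _ ≤ 2 * π^3 / 3 := mul_le_of_le_one_right (by positivity)
        (rpow_le_one hγ0.le hγ1.le (by norm_num))
end

section
/- (Combinatorial lemma.) There is a universal constant C > 0 with the following property. Let a : ℤ → ℂ be a sequence with ∑_{k∈ℤ} |a_k| = S < ∞ and let N ≥ 1 be a natural number. Then ∑_{n∈ℤ} ∑_{(n₁,…,n_N)∈ℤ^N with n₁²+⋯+n_N² ≠ n²} |a_{n₁} a_{n₂} ⋯ a_{n_N}| / |n₁² + ⋯ + n_N² − n²| ≤ C · S^N. In particular the left-hand side is finite. -/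
open scoped ENNReal

/-! With `r = ⌊√m⌋`, every `n` with `n² ≠ m` satisfies `(||n| - r| + 1)² ≤ 8 |m - n²|`, so
`∑ₙ |m - n²|⁻¹` is bounded independently of `m` by a multiple of `∑ₖ (k + 1)⁻²`. Summing in
`ℝ≥0∞` we may swap the sums over `n` and `v`, and the remaining sum over `v` factors as
`(∑ₖ |aₖ|)^N`. -/

/- If `n ≤ r` then `m - n² ≥ r² - n² ≥ (r - n)²`, and if `n > r` then
`n² - m ≥ n² - (r + 1)² + 1 ≥ (n - r - 1)² + 1`; combine with `|m - n²| ≥ 1`. -/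
lemma sq_abs_sub_add_one_le {r m n : ℤ} (hr : 0 ≤ r) (hrm : r ^ 2 ≤ m) (hmr : m < (r + 1) ^ 2)
    (hn : 0 ≤ n) (hmn : m ≠ n ^ 2) : (|n - r| + 1) ^ 2 ≤ 8 * |m - n ^ 2| := by
  rcases le_or_gt n r with hnr | hrn
  · have hpos : 0 < m - n ^ 2 := by
      have : n ^ 2 ≤ m := by nlinarith
      exact sub_pos.2 (lt_of_le_of_ne this (Ne.symm hmn))
    rw [abs_of_nonpos (by linarith), abs_of_pos hpos]
    nlinarith [mul_nonneg (sub_nonneg.2 hnr) hn]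
  · rw [abs_of_pos (by linarith), abs_of_neg (by nlinarith)]
    nlinarith [mul_nonneg (sub_nonneg.2 (Int.add_one_le_iff.2 hrn)) (add_nonneg hr hn)]

lemma ofReal_inv_abs_sub_sq_le {r m : ℤ} (hr : 0 ≤ r) (hrm : r ^ 2 ≤ m) (hmr : m < (r + 1) ^ 2)
    (n : ℤ) : ENNReal.ofReal |(m : ℝ) - n ^ 2|⁻¹
      ≤ 8 * ENNReal.ofReal (1 / ((((n.natAbs : ℤ) - r).natAbs : ℝ) + 1) ^ 2) := by
  by_cases hmn : m = n ^ 2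
  · simp [hmn]
  have hsq := sq_abs_sub_add_one_le hr hrm hmr (Int.natCast_nonneg n.natAbs)
    (by rwa [Int.natAbs_sq])
  rw [Int.natAbs_sq] at hsq
  have hpos : (0 : ℝ) < |(m : ℝ) - n ^ 2| := by
    rw [abs_pos, sub_ne_zero]; exact_mod_cast hmn
  rw [show (8 : ℝ≥0∞) = ENNReal.ofReal 8 by norm_num, ← ENNReal.ofReal_mul (by norm_num)]
  refine ENNReal.ofReal_le_ofReal ?_
  rw [mul_one_div, inv_eq_one_div, div_le_div_iff₀ hpos (by positivity), one_mul,
    Nat.cast_natAbs, Int.cast_abs]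
  exact_mod_cast hsq

open Real in
lemma tsum_ofReal_one_div_succ_sq_le_two :
    ∑' k : ℕ, ENNReal.ofReal (1 / ((k : ℝ) + 1) ^ 2) ≤ 2 := by
  have h : HasSum (fun k : ℕ => 1 / ((k : ℝ) + 1) ^ 2) (π ^ 2 / 6) := by
    simpa using (hasSum_nat_add_iff' 1).mpr hasSum_zeta_two
  rw [← ENNReal.ofReal_tsum_of_nonneg (fun _ => by positivity) h.summable, h.tsum_eq,
    ← ENNReal.ofReal_ofNat 2]
  exact ENNReal.ofReal_le_ofReal (by nlinarith [pi_lt_d2, pi_pos])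

lemma tsum_natAbs_le (F : ℕ → ℝ≥0∞) : ∑' n : ℤ, F n.natAbs ≤ 2 * ∑' k, F k := by
  have h : ∀ k : ℕ, (-((k : ℤ) + 1)).natAbs = k + 1 := fun k => by omega
  rw [tsum_of_nat_of_neg_add_one ENNReal.summable ENNReal.summable, two_mul]
  simp only [Int.natAbs_natCast, h]
  exact add_le_add_right (ENNReal.tsum_comp_le_tsum_of_injective (add_left_injective 1) F) _

lemma tsum_natAbs_natAbs_sub_le (F : ℕ → ℝ≥0∞) (r : ℤ) :
    ∑' n : ℤ, F ((n.natAbs : ℤ) - r).natAbs ≤ 4 * ∑' k, F k :=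
  calc ∑' n : ℤ, F ((n.natAbs : ℤ) - r).natAbs
      ≤ 2 * ∑' k : ℕ, F ((k : ℤ) - r).natAbs := tsum_natAbs_le fun k => F ((k : ℤ) - r).natAbs
    _ ≤ 2 * ∑' n : ℤ, F (n - r).natAbs := by
      gcongr
      exact ENNReal.tsum_comp_le_tsum_of_injective Nat.cast_injective fun n => F (n - r).natAbs
    _ = 2 * ∑' n : ℤ, F n.natAbs := congrArg _ ((Equiv.subRight r).tsum_eq fun n => F n.natAbs)
    _ ≤ 2 * (2 * ∑' k, F k) := by gcongr; exact tsum_natAbs_le F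
    _ = 4 * ∑' k, F k := by ring

lemma tsum_ofReal_inv_abs_sub_sq_le {m : ℤ} (hm : 0 ≤ m) :
    ∑' n : ℤ, ENNReal.ofReal |(m : ℝ) - n ^ 2|⁻¹ ≤ 64 := by
  lift m to ℕ using hm
  have hrm : ((Nat.sqrt m : ℤ)) ^ 2 ≤ m := by exact_mod_cast Nat.sqrt_le' m
  have hmr : (m : ℤ) < (Nat.sqrt m + 1) ^ 2 := by exact_mod_cast Nat.lt_succ_sqrt' m
  calc ∑' n : ℤ, ENNReal.ofReal |((m : ℤ) : ℝ) - n ^ 2|⁻¹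
      ≤ ∑' n : ℤ, 8 * ENNReal.ofReal
          (1 / ((((n.natAbs : ℤ) - Nat.sqrt m).natAbs : ℝ) + 1) ^ 2) :=
        ENNReal.tsum_le_tsum fun n => ofReal_inv_abs_sub_sq_le (by positivity) hrm hmr n
    _ ≤ 8 * (4 * 2) := by
        rw [ENNReal.tsum_mul_left]
        gcongr
        exact (tsum_natAbs_natAbs_sub_le (fun k => ENNReal.ofReal (1 / ((k : ℝ) + 1) ^ 2)) _).trans
          (by gcongr; exact tsum_ofReal_one_div_succ_sq_le_two)
    _ = 64 := by norm_num

lemma tsum_fin_pi_prod_eq_pow {β : Type*} (A : β → ℝ≥0∞) (N : ℕ) :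
    ∑' v : Fin N → β, ∏ i, A (v i) = (∑' b, A b) ^ N := by
  induction N with
  | zero => simp
  | succ N ih =>
    rw [← (Fin.consEquiv fun _ => β).tsum_eq, ENNReal.tsum_prod', pow_succ']
    simp [Fin.prod_univ_succ, Fin.consEquiv, ENNReal.tsum_mul_left, ENNReal.tsum_mul_right, ih]

/-- Combinatorial lemma: there is a universal constant `C > 0` such that for every
absolutely summable sequence `a : ℤ → ℂ` with `∑ |a_k| = S` and every `N ≥ 1`,
`∑_{n} ∑_{n₁²+⋯+n_N² ≠ n²} |a_{n₁} ⋯ a_{n_N}| / |n₁²+⋯+n_N² - n²| ≤ C S^N`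
(the left-hand side being in particular finite, which is expressed here by working
in `ℝ≥0∞`). -/
theorem stmt12 :
    ∃ C > (0:ℝ), ∀ (a : ℤ → ℂ) (S : ℝ),
      Summable (fun k : ℤ => ‖a k‖) → (∑' k : ℤ, ‖a k‖) = S →
      ∀ (N : ℕ), 1 ≤ N →
        (∑' n : ℤ, ∑' v : {v : Fin N → ℤ // (∑ i, (v i)^2) ≠ n^2},
            ENNReal.ofReal ((∏ i, ‖a (v.1 i)‖) /
              |(∑ i, ((v.1 i : ℝ))^2) - (n:ℝ)^2|))
          ≤ ENNReal.ofReal (C * S ^ N) := by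
  refine ⟨64, by norm_num, fun a S hsum hS N _ => ?_⟩
  have hS0 : 0 ≤ S := hS ▸ tsum_nonneg fun k => norm_nonneg (a k)
  have hA : ∑' k, ENNReal.ofReal ‖a k‖ = ENNReal.ofReal S := by
    rw [← hS, ENNReal.ofReal_tsum_of_nonneg (fun k => norm_nonneg _) hsum]
  have hterm : ∀ (n : ℤ) (v : Fin N → ℤ),
      ENNReal.ofReal ((∏ i, ‖a (v i)‖) / |(∑ i, ((v i : ℝ))^2) - (n:ℝ)^2|)
        = (∏ i, ENNReal.ofReal ‖a (v i)‖)
          * ENNReal.ofReal |((∑ i, v i ^ 2 : ℤ) : ℝ) - n ^ 2|⁻¹ := by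
    intro n v
    rw [div_eq_mul_inv, ENNReal.ofReal_mul (by positivity),
      ENNReal.ofReal_prod_of_nonneg fun i _ => norm_nonneg _]
    simp only [Int.cast_sum, Int.cast_pow]
  -- The excluded `v` contribute `|0|⁻¹ = 0`, so we may sum over all of them.
  calc _ ≤ ∑' (n : ℤ) (v : Fin N → ℤ),
          ENNReal.ofReal ((∏ i, ‖a (v i)‖) / |(∑ i, ((v i : ℝ))^2) - (n:ℝ)^2|) :=
        ENNReal.tsum_le_tsum fun n =>
          ENNReal.tsum_comp_le_tsum_of_injective Subtype.val_injective _
    _ = ∑' v : Fin N → ℤ, (∏ i, ENNReal.ofReal ‖a (v i)‖)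
          * ∑' n : ℤ, ENNReal.ofReal |((∑ i, v i ^ 2 : ℤ) : ℝ) - n ^ 2|⁻¹ := by
        rw [ENNReal.tsum_comm]
        exact tsum_congr fun v => (tsum_congr fun n => hterm n v).trans ENNReal.tsum_mul_left
    _ ≤ ∑' v : Fin N → ℤ, (∏ i, ENNReal.ofReal ‖a (v i)‖) * 64 := by
        gcongr
        exact tsum_ofReal_inv_abs_sub_sq_le (by positivity)
    _ = ENNReal.ofReal (64 * S ^ N) := by
        rw [ENNReal.tsum_mul_right, tsum_fin_pi_prod_eq_pow fun k => ENNReal.ofReal ‖a k‖, hA,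
          ENNReal.ofReal_mul (by norm_num), ENNReal.ofReal_pow hS0, mul_comm]
        norm_num
end

section
/- There exists a constant C > 0 such that for every nonnegative integer K, ∑_{n∈ℤ, n² ≠ K} 1 / |K − n²| ≤ C. -/
open scoped ENNReal
set_option maxHeartbeats 800000

private noncomputable def gB : ℕ → ℝ≥0∞ := fun i => ENNReal.ofReal (1 / max 1 ((i:ℝ)^2))

private def jfB (s : ℕ) (n : ℤ) : ℕ :=
  if n.natAbs ≤ s then s - n.natAbs else n.natAbs - s - 1

private noncomputable def FB (s : ℕ) (n : ℤ) : ℝ≥0∞ := gB (jfB s n)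

/-- Uniform bound: there is `C > 0` such that for every nonnegative integer `K`,
`∑_{n∈ℤ, n² ≠ K} 1 / |K - n²| ≤ C` (stated in `ℝ≥0∞` so that the bound in particular
asserts finiteness of the sum). -/
theorem stmt13 :
    ∃ C > (0:ℝ), ∀ (K : ℕ),
      (∑' n : {n : ℤ // n^2 ≠ (K:ℤ)},
          ENNReal.ofReal (1 / |(K:ℝ) - ((n:ℤ):ℝ)^2|))
        ≤ ENNReal.ofReal C := by
  classical
  set T₀ : ℝ := ∑' j : ℕ, 1 / ((j:ℝ)+1)^2 with hT₀def
  have hsum0 : Summable (fun j : ℕ => 1 / ((j:ℝ)+1)^2) := by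
    have hb : Summable (fun n : ℕ => 1 / (n:ℝ)^2) :=
      Real.summable_one_div_nat_pow.mpr (by norm_num)
    have := (summable_nat_add_iff (f := fun n : ℕ => 1 / (n:ℝ)^2) 1).mpr hb
    simpa [add_comm] using this
  have hT₀nonneg : 0 ≤ T₀ := tsum_nonneg (fun j => by positivity)
  refine ⟨4*(1+T₀), by nlinarith, fun K => ?_⟩
  set s : ℕ := Nat.sqrt K with hs
  have h1 : (s:ℤ)^2 ≤ (K:ℤ) := by exact_mod_cast Nat.sqrt_le' K
  have h2 : (K:ℤ) < ((s:ℤ)+1)^2 := by exact_mod_cast Nat.lt_succ_sqrt' K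
  -- pointwise bound
  have key : ∀ n : ℤ, n^2 ≠ (K:ℤ) →
      ENNReal.ofReal (1 / |(K:ℝ) - ((n:ℤ):ℝ)^2|) ≤ FB s n := by
    intro n hn
    have hmabs : ((n.natAbs : ℤ))^2 = n^2 := by
      simpa using Int.natAbs_sq n
    have hint : max 1 (((jfB s n : ℤ))^2) ≤ |(K:ℤ) - n^2| := by
      rw [← hmabs]
      set m : ℕ := n.natAbs with hm
      by_cases hle : m ≤ s
      · have hj : (jfB s n : ℤ) = (s:ℤ) - m := by
          simp only [jfB, ← hm, if_pos hle]; omega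
        have hms : (m:ℤ) ≤ s := by exact_mod_cast hle
        have hm0 : (0:ℤ) ≤ m := by positivity
        have hlt : (m:ℤ)^2 < K := by
          rcases lt_or_eq_of_le (show (m:ℤ)^2 ≤ K by nlinarith) with h | h
          · exact h
          · exact absurd (hmabs ▸ h) hn
        rw [abs_of_pos (by linarith), hj, max_le_iff]
        refine ⟨by linarith, by nlinarith⟩
      · have hge : (s:ℤ) + 1 ≤ m := by
          have := Nat.lt_of_not_le hle; exact_mod_cast this
        have hj : (jfB s n : ℤ) = (m:ℤ) - s - 1 := by
          simp only [jfB, ← hm, if_neg hle]; omega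
        have hlt : (K:ℤ) < (m:ℤ)^2 := by nlinarith
        rw [abs_of_neg (by linarith), hj, max_le_iff]
        refine ⟨by linarith, by nlinarith⟩
    have hreal : max 1 (((jfB s n : ℝ))^2) ≤ |(K:ℝ) - ((n:ℤ):ℝ)^2| := by
      have h' : ((max 1 (((jfB s n : ℤ))^2) : ℤ) : ℝ) ≤ ((|(K:ℤ) - n^2| : ℤ) : ℝ) := by
        exact_mod_cast hint
      push_cast at h'
      convert h' using 2 <;> push_cast <;> ring_nf
    have hpos : (0:ℝ) < max 1 (((jfB s n : ℝ))^2) := lt_of_lt_of_le one_pos (le_max_left _ _)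
    apply ENNReal.ofReal_le_ofReal
    exact one_div_le_one_div_of_le hpos hreal
  -- subtype sum ≤ sum over ℤ of F
  have stepB : (∑' n : {n : ℤ // n^2 ≠ (K:ℤ)},
      ENNReal.ofReal (1 / |(K:ℝ) - ((n:ℤ):ℝ)^2|)) ≤ ∑' n : ℤ, FB s n := by
    refine le_trans (le_of_eq (tsum_subtype {n : ℤ | n^2 ≠ (K:ℤ)}
      (fun n => ENNReal.ofReal (1 / |(K:ℝ) - ((n:ℤ):ℝ)^2|)))) ?_
    refine ENNReal.tsum_le_tsum fun n => ?_
    by_cases h : n^2 ≠ (K:ℤ)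
    · simpa [Set.indicator, h] using key n h
    · simp [Set.indicator, h]
  have hFneg : ∀ m : ℕ, FB s (-((m:ℤ)+1)) = FB s ((m:ℤ)+1) := by
    intro m
    have h : (-((m:ℤ)+1)).natAbs = ((m:ℤ)+1).natAbs := by omega
    unfold FB jfB
    rw [h]
  have stepC : (∑' n : ℤ, FB s n) ≤ (∑' m : ℕ, FB s (m:ℤ)) + (∑' m : ℕ, FB s (m:ℤ)) := by
    rw [(tsum_of_nat_of_neg_add_one ENNReal.summable ENNReal.summable :
      (∑' n : ℤ, FB s n) = _)]
    refine add_le_add le_rfl ?_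
    calc (∑' m : ℕ, FB s (-((m:ℤ)+1)))
        = ∑' m : ℕ, (fun k : ℕ => FB s (k:ℤ)) (m+1) := by
          refine tsum_congr fun m => ?_
          simp only []
          rw [hFneg m]; norm_cast
      _ ≤ ∑' m : ℕ, FB s (m:ℤ) :=
          ENNReal.tsum_comp_le_tsum_of_injective (add_left_injective 1) _
  have hFg : ∀ m : ℕ, FB s (m : ℤ) = gB (if m ≤ s then s - m else m - s - 1) := by
    intro m
    unfold FB jfB
    rw [Int.natAbs_natCast]
  have stepD : (∑' m : ℕ, FB s (m : ℤ)) ≤ (∑' i : ℕ, gB i) + (∑' i : ℕ, gB i) := by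
    set f1 : ℕ → ℝ≥0∞ := fun m => if m ≤ s then gB (s - m) else 0 with hf1
    set f2 : ℕ → ℝ≥0∞ := fun m => if m ≤ s then 0 else gB (m - s - 1) with hf2
    have hsplit : (fun m : ℕ => FB s (m:ℤ)) = fun m => f1 m + f2 m := by
      funext m
      rw [hFg m]
      by_cases h : m ≤ s <;> simp [hf1, hf2, h]
    rw [hsplit, ENNReal.tsum_add]
    refine add_le_add ?_ ?_
    · calc (∑' m : ℕ, f1 m) = ∑ m ∈ Finset.range (s+1), f1 m := by
            refine tsum_eq_sum fun m hm => ?_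
            have : ¬ m ≤ s := by simpa [Nat.lt_succ_iff] using hm
            simp [hf1, this]
        _ = ∑ m ∈ Finset.range (s+1), gB (s - m) := by
            refine Finset.sum_congr rfl fun m hm => ?_
            simp [hf1, (by simpa [Nat.lt_succ_iff] using Finset.mem_range.mp hm : m ≤ s)]
        _ = ∑ m ∈ Finset.range (s+1), gB m := by
            have := Finset.sum_range_reflect (fun j => gB j) (s+1)
            simpa using this
        _ ≤ ∑' i : ℕ, gB i := ENNReal.sum_le_tsum _
    · have hinj : Function.Injective (fun i : ℕ => i + (s+1)) := add_left_injective (s+1)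
      have hsupp : Function.support f2 ⊆ Set.range (fun i : ℕ => i + (s+1)) := by
        intro m hm
        have : ¬ m ≤ s := by
          intro h; apply hm; simp [hf2, h]
        exact ⟨m - (s+1), by change m - (s+1) + (s+1) = m; omega⟩
      have heq : ∀ i : ℕ, f2 (i + (s+1)) = gB i := by
        intro i
        have h : ¬ (i + (s+1) ≤ s) := by omega
        simp only [hf2, if_neg h]
        congr 1
        omega
      calc (∑' m : ℕ, f2 m) = ∑' i : ℕ, f2 (i + (s+1)) := (hinj.tsum_eq hsupp).symm
        _ = ∑' i : ℕ, gB i := tsum_congr heq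
        _ ≤ ∑' i : ℕ, gB i := le_rfl
  have hT : (∑' i : ℕ, gB i) ≤ ENNReal.ofReal (1 + T₀) := by
    rw [tsum_eq_zero_add' ENNReal.summable]
    have hg0 : gB 0 = ENNReal.ofReal 1 := by
      simp [gB]
    have hgs : ∀ i : ℕ, gB (i+1) = ENNReal.ofReal (1 / ((i:ℝ)+1)^2) := by
      intro i
      have hmax : max 1 ((((i:ℕ)+1:ℕ):ℝ)^2) = ((i:ℝ)+1)^2 := by
        push_cast
        rw [max_eq_right]
        nlinarith [Nat.cast_nonneg (α := ℝ) i]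
      unfold gB
      rw [hmax]
    rw [hg0, tsum_congr hgs, ← ENNReal.ofReal_tsum_of_nonneg (fun j => by positivity) hsum0,
      ← ENNReal.ofReal_add (by norm_num) hT₀nonneg]
  calc (∑' n : {n : ℤ // n^2 ≠ (K:ℤ)},
          ENNReal.ofReal (1 / |(K:ℝ) - ((n:ℤ):ℝ)^2|))
      ≤ ∑' n : ℤ, FB s n := stepB
    _ ≤ (∑' m : ℕ, FB s (m:ℤ)) + (∑' m : ℕ, FB s (m:ℤ)) := stepC
    _ ≤ ((∑' i : ℕ, gB i) + (∑' i : ℕ, gB i)) + ((∑' i : ℕ, gB i) + (∑' i : ℕ, gB i)) :=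
        add_le_add stepD stepD
    _ ≤ (ENNReal.ofReal (1 + T₀) + ENNReal.ofReal (1 + T₀))
        + (ENNReal.ofReal (1 + T₀) + ENNReal.ofReal (1 + T₀)) :=
        add_le_add (add_le_add hT hT) (add_le_add hT hT)
    _ = ENNReal.ofReal (4 * (1 + T₀)) := by
        rw [← ENNReal.ofReal_add (by linarith) (by linarith),
          ← ENNReal.ofReal_add (by linarith) (by linarith)]
        congr 1
        ring
end
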